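/- arXiv:math/9804139 — 5 statements merged into one kernel-verified Lean document; each statement's English description precedes it below -/
import Mathlib

section
/- Let A be an associative algebra over ℚ(q) with elements (e_n)_{n∈ℤ} satisfying e_{m+1}e_n − q²·e_m e_{n+1} = q²·e_n e_{m+1} − e_{n+1}e_m for all m,n ∈ ℤ. Then for all n ∈ ℤ and all integers k ≥ 1: e_{n+2k}e_n = q²·e_n e_{n+2k} + (q⁴ − 1)·Σ_{j=1}^{k-1} q^{2(j-1)} e_{n+j} e_{n+2k−j} + (q² − 1)q^{2(k-1)}·e_{n+k}². -/
open Finset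

set_option maxHeartbeats 1000000 in
theorem aux_even {A : Type*} [Ring A] (Q : A) (e : ℤ → A)
    (h : ∀ m n : ℤ, e (m + 1) * e n - Q * (e m * e (n + 1)) =
        Q * (e n * e (m + 1)) - e (n + 1) * e m) :
    ∀ k : ℕ, 1 ≤ k → ∀ n : ℤ,
      e (n + 2 * k) * e n =
        Q * (e n * e (n + 2 * k)) +
          (Q ^ 2 - 1) * ∑ i ∈ Finset.range (k - 1),
            Q ^ i * (e (n + 1 + i) * e (n + 2 * k - 1 - i)) +
          (Q - 1) * Q ^ (k - 1) * e (n + k) ^ 2 := by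
  intro k hk
  induction k, hk using Nat.le_induction with
  | base =>
    intro n
    have h1 := h (n + 1) n
    rw [show (n : ℤ) + 1 + 1 = n + 2 by ring] at h1
    rw [sub_eq_iff_eq_add] at h1
    norm_num
    rw [h1, pow_two]
    noncomm_ring
  | succ k hk ih =>
    obtain ⟨m, rfl⟩ : ∃ m, k = m + 1 := ⟨k - 1, (Nat.succ_pred_eq_of_pos hk).symm⟩
    intro n
    have h1 := h (n + 2 * (m + 1) + 1) n
    rw [sub_eq_iff_eq_add] at h1
    have h2 := ih (n + 1)
    push_cast at h1 h2 ⊢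
    rw [show n + 2 * ((m : ℤ) + 1 + 1) = n + 2 * ((m : ℤ) + 1) + 1 + 1 by ring]
    rw [show n + ((m : ℤ) + 1 + 1) = n + 1 + ((m : ℤ) + 1) by ring]
    rw [h1]
    rw [show (n : ℤ) + 1 + 2 * ((m : ℤ) + 1) = n + 2 * ((m : ℤ) + 1) + 1 by ring] at h2
    rw [h2]
    rw [Finset.sum_range_succ']
    have hs : (∑ x ∈ Finset.range m, Q ^ (x + 1) *
          (e (n + 1 + ((x + 1 : ℕ) : ℤ)) * e (n + 2 * ((m : ℤ) + 1) + 1 + 1 - 1 - ((x + 1 : ℕ) : ℤ)))) =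
        Q * ∑ x ∈ Finset.range m, Q ^ x *
          (e (n + 1 + 1 + (x : ℤ)) * e (n + 2 * ((m : ℤ) + 1) + 1 - 1 - (x : ℤ))) := by
      rw [Finset.mul_sum]
      refine Finset.sum_congr rfl fun x _ => ?_
      push_cast
      have a1 : n + 1 + ((x : ℤ) + 1) = n + 1 + 1 + (x : ℤ) := by ring
      have a2 : n + 2 * ((m : ℤ) + 1) + 1 + 1 - 1 - ((x : ℤ) + 1)
          = n + 2 * ((m : ℤ) + 1) + 1 - 1 - (x : ℤ) := by ring
      rw [a1, a2, pow_succ', mul_assoc]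
    rw [hs]
    simp only [Nat.cast_zero, add_zero, sub_zero, pow_zero, one_mul]
    rw [show n + 2 * ((m : ℤ) + 1) + 1 + 1 - 1 = n + 2 * ((m : ℤ) + 1) + 1 by ring]
    rw [pow_succ' Q m]
    noncomm_ring

/-- Even-distance normal ordering rule.  If `(e_n)_{n∈ℤ}` in an associative
`ℚ(q)`-algebra satisfy `e_{m+1}e_n − q²·e_m e_{n+1} = q²·e_n e_{m+1} − e_{n+1}e_m`
for all `m, n ∈ ℤ`, then for all `n ∈ ℤ` and `k ≥ 1`:
`e_{n+2k}e_n = q²·e_n e_{n+2k}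
  + (q⁴ − 1)·∑_{j=1}^{k-1} q^{2(j-1)} e_{n+j} e_{n+2k−j}
  + (q² − 1)q^{2(k-1)}·e_{n+k}²`. -/
theorem mode_relation_even_distance {A : Type*} [Ring A] [Algebra (RatFunc ℚ) A]
    (e : ℤ → A)
    (h : ∀ m n : ℤ,
      e (m + 1) * e n - algebraMap (RatFunc ℚ) A (RatFunc.X ^ 2) * (e m * e (n + 1)) =
        algebraMap (RatFunc ℚ) A (RatFunc.X ^ 2) * (e n * e (m + 1)) - e (n + 1) * e m) :
    ∀ n : ℤ, ∀ k : ℕ, 1 ≤ k →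
      e (n + 2 * k) * e n =
        algebraMap (RatFunc ℚ) A (RatFunc.X ^ 2) * (e n * e (n + 2 * k)) +
          (algebraMap (RatFunc ℚ) A (RatFunc.X ^ 4) - 1) *
            ∑ j ∈ Icc 1 (k - 1),
              algebraMap (RatFunc ℚ) A (RatFunc.X ^ (2 * (j - 1))) *
                (e (n + j) * e (n + 2 * k - j)) +
          (algebraMap (RatFunc ℚ) A (RatFunc.X ^ 2) - 1) *
            algebraMap (RatFunc ℚ) A (RatFunc.X ^ (2 * (k - 1))) * e (n + k) ^ 2 := by
  intro n k hk
  have key := aux_even (algebraMap (RatFunc ℚ) A (RatFunc.X ^ 2)) e h k hk n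
  rw [key]
  rw [show (algebraMap (RatFunc ℚ) A) (RatFunc.X ^ 4)
      = (algebraMap (RatFunc ℚ) A) (RatFunc.X ^ 2) ^ 2 by
    rw [show (RatFunc.X (K := ℚ)) ^ 4 = (RatFunc.X ^ 2) ^ 2 by ring]; exact map_pow _ _ _]
  rw [show (algebraMap (RatFunc ℚ) A) (RatFunc.X ^ (2 * (k - 1)))
      = (algebraMap (RatFunc ℚ) A) (RatFunc.X ^ 2) ^ (k - 1) by
    rw [pow_mul]; exact map_pow _ _ _]
  congr 1
  congr 1
  congr 1
  rw [← Finset.Ico_add_one_right_eq_Icc, show k - 1 + 1 = k by omega, Finset.sum_Ico_eq_sum_range]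
  refine Finset.sum_congr rfl fun i _ => ?_
  rw [show 2 * (1 + i - 1) = 2 * i by omega]
  rw [show (algebraMap (RatFunc ℚ) A) (RatFunc.X ^ (2 * i))
      = (algebraMap (RatFunc ℚ) A) (RatFunc.X ^ 2) ^ i by
    rw [pow_mul]; exact map_pow _ _ _]
  have b1 : (n + ((1 + i : ℕ) : ℤ)) = n + 1 + i := by push_cast; ring
  have b2 : (n + 2 * (k : ℤ) - ((1 + i : ℕ) : ℤ)) = n + 2 * k - 1 - i := by push_cast; ring
  rw [b1, b2]
end

section
/- Let A be an associative algebra over ℚ(q) with elements (e_n)_{n∈ℤ} satisfying e_{m+1}e_n − q²·e_m e_{n+1} = q²·e_n e_{m+1} − e_{n+1}e_m for all m,n ∈ ℤ. Then for all n ∈ ℤ and all integers k ≥ 0: e_{n+2k+1}e_n = q²·e_n e_{n+2k+1} + (q⁴ − 1)·Σ_{j=1}^{k} q^{2(j-1)} e_{n+j} e_{n+2k+1−j}. -/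
/-!
The relation at `(m, n) = (n + 2k + 2, n)` expresses `e_{n+2k+3} e_n` through
`e_{n+2k+2} e_{n+1}`, a product at odd distance `2k + 1` again, so induction on `k` (for all `n`
at once) reduces everything to `k = 0`. There the relation at `m = n` says that twice
`e_{n+1} e_n - q² e_n e_{n+1}` vanishes.
-/

open Finset

theorem Finset.sum_Icc_one_succ {M : Type*} [AddCommMonoid M] (f : ℕ → M) (k : ℕ) :
    ∑ j ∈ Icc 1 (k + 1), f j = f 1 + ∑ j ∈ Icc 1 k, f (j + 1) := by
  rw [Icc_eq_cons_Ioc (by omega), sum_cons, ← Icc_add_one_left_eq_Ioc, ← map_add_right_Icc,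
    sum_map]
  rfl

section CurrentRelation

variable {R A : Type*} [CommRing R] [Ring A] [Algebra R A] (c : R) (e : ℤ → A)

/-- The mode form of `(z - c w) e(z) e(w) = (c z - w) e(w) e(z)` for `e(z) = ∑ e_n z^{-n}`. -/
def CurrentRelation : Prop :=
  ∀ m n : ℤ, e (m + 1) * e n - c • (e m * e (n + 1)) = c • (e n * e (m + 1)) - e (n + 1) * e m

def oddTail (n : ℤ) (k : ℕ) : A :=
  ∑ j ∈ Icc 1 k, c ^ (j - 1) • (e (n + j) * e (n + 2 * k + 1 - j))

theorem oddTail_zero (n : ℤ) : oddTail c e n 0 = 0 := by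
  simp [oddTail]

theorem oddTail_succ (n : ℤ) (k : ℕ) :
    oddTail c e n (k + 1) = e (n + 1) * e (n + 2 * k + 2) + c • oddTail c e (n + 1) k := by
  rw [oddTail, sum_Icc_one_succ, oddTail, smul_sum]
  congr 1
  · simp only [Nat.sub_self, pow_zero, one_smul, Nat.cast_add, Nat.cast_one]
    ring_nf
  · refine sum_congr rfl fun j hj => ?_
    rw [smul_smul, ← pow_succ', Nat.add_sub_cancel, Nat.sub_add_cancel (mem_Icc.1 hj).1]
    push_cast
    ring_nf

variable {c e}

theorem CurrentRelation.mul_succ_self (h : CurrentRelation c e) (h2 : IsUnit (2 : R))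
    (n : ℤ) : e (n + 1) * e n = c • (e n * e (n + 1)) := by
  have hdouble := sub_eq_sub_iff_add_eq_add.1 (h n n)
  rw [← sub_eq_zero, ← h2.smul_left_cancel, smul_zero, two_smul, sub_add_sub_comm, hdouble,
    sub_self]

theorem CurrentRelation.mul_odd_distance (h : CurrentRelation c e) (h2 : IsUnit (2 : R))
    (n : ℤ) (k : ℕ) :
    e (n + 2 * k + 1) * e n = c • (e n * e (n + 2 * k + 1)) + (c ^ 2 - 1) • oddTail c e n k := by
  induction k generalizing n with
  | zero => simpa [oddTail_zero] using h.mul_succ_self h2 n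
  | succ k ih =>
    have hrel := h (n + 2 * k + 2) n
    have ih' := ih (n + 1)
    rw [show n + 1 + 2 * k + 1 = n + 2 * k + 2 by ring] at ih'
    rw [oddTail_succ, show n + 2 * ((k + 1 : ℕ) : ℤ) + 1 = n + 2 * k + 2 + 1 by push_cast; ring]
    linear_combination (norm := module) hrel + c • ih'

end CurrentRelation

/-- Odd-distance normal ordering rule.  If `(e_n)_{n∈ℤ}` in an associative
`ℚ(q)`-algebra satisfy `e_{m+1}e_n − q²·e_m e_{n+1} = q²·e_n e_{m+1} − e_{n+1}e_m`
for all `m, n ∈ ℤ`, then for all `n ∈ ℤ` and `k ≥ 0`: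
`e_{n+2k+1}e_n = q²·e_n e_{n+2k+1}
  + (q⁴ − 1)·∑_{j=1}^{k} q^{2(j-1)} e_{n+j} e_{n+2k+1−j}`. -/
theorem mode_relation_odd_distance {A : Type*} [Ring A] [Algebra (RatFunc ℚ) A]
    (e : ℤ → A)
    (h : ∀ m n : ℤ,
      e (m + 1) * e n - algebraMap (RatFunc ℚ) A (RatFunc.X ^ 2) * (e m * e (n + 1)) =
        algebraMap (RatFunc ℚ) A (RatFunc.X ^ 2) * (e n * e (m + 1)) - e (n + 1) * e m) :
    ∀ n : ℤ, ∀ k : ℕ,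
      e (n + 2 * k + 1) * e n =
        algebraMap (RatFunc ℚ) A (RatFunc.X ^ 2) * (e n * e (n + 2 * k + 1)) +
          (algebraMap (RatFunc ℚ) A (RatFunc.X ^ 4) - 1) *
            ∑ j ∈ Icc 1 k,
              algebraMap (RatFunc ℚ) A (RatFunc.X ^ (2 * (j - 1))) *
                (e (n + j) * e (n + 2 * k + 1 - j)) := by
  have hrel : CurrentRelation (RatFunc.X ^ 2 : RatFunc ℚ) e := by
    simpa only [CurrentRelation, Algebra.smul_def] using h
  intro n k
  simpa only [oddTail, Algebra.smul_def, mul_sum, map_sub, map_one, ← pow_mul] using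
    hrel.mul_odd_distance (isUnit_iff_ne_zero.mpr two_ne_zero) n k
end

section
/- Let A be an associative ℚ(p)-algebra (completed so that power series in x and y make sense, e.g. A = ℚ(p)⟨⟨x,y⟩⟩/(yx − p·xy)), and suppose y·x = p·x·y. Then exp_p(x + y) = exp_p(x)·exp_p(y), where exp_p(z) = Σ_{n≥0} z^n/(n)_p! with (n)_p = 1 + p + ⋯ + p^{n-1}. -/
/-!
Write `z^[n] = ((n)_p!)⁻¹ • z^n`. Moving `x` to the left past `y^j` costs a factor `p^j`, so
`x^[i] y^[j] (x + y) = p^j (i+1)_p x^[i+1] y^[j] + (j+1)_p x^[i] y^[j+1]`. Collecting the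
coefficient of `x^[a] y^[b]` gives `(b)_p + p^b (a)_p = (a+b)_p`, hence by induction
`(x + y)^[n] = ∑_{a+b=n} x^[a] y^[b]`, which is the coefficient of `t^n` in `exp_p(x) exp_p(y)`.
-/

open Finset

/-- The `p`-factorial `(n)_p! = (1)_p (2)_p ⋯ (n)_p` with `(j)_p = 1 + p + ⋯ + p^{j-1}`. -/
noncomputable def qFactorial {F : Type*} [Field F] (p : F) (n : ℕ) : F :=
  ∏ j ∈ range n, ∑ i ∈ range (j + 1), p ^ i

def qNat {R : Type*} [Semiring R] (p : R) (n : ℕ) : R :=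
  ∑ i ∈ range n, p ^ i

section qNat

variable {R : Type*} [Semiring R] (p : R)

@[simp]
lemma qNat_zero : qNat p 0 = 0 := sum_range_zero _

lemma qNat_add (a b : ℕ) : qNat p (a + b) = qNat p a + p ^ a * qNat p b := by
  simp only [qNat, sum_range_add, pow_add, mul_sum]

lemma map_qNat {S : Type*} [Semiring S] (f : R →+* S) (n : ℕ) :
    f (qNat p n) = qNat (f p) n := by
  simp only [qNat, map_sum, map_pow]

end qNat

lemma qFactorial_succ {F : Type*} [Field F] (p : F) (n : ℕ) :
    qFactorial p (n + 1) = qFactorial p n * qNat p (n + 1) :=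
  prod_range_succ _ _

lemma qNat_X_succ_ne_zero {K : Type*} [Field K] (n : ℕ) :
    qNat (RatFunc.X : RatFunc K) (n + 1) ≠ 0 := by
  rw [← RatFunc.algebraMap_X, ← RingHom.coe_coe, ← map_qNat, RingHom.coe_coe,
    map_ne_zero_iff _ (RatFunc.algebraMap_injective K)]
  -- the constant coefficient of `1 + X + ⋯ + X^n` is `1`
  intro h
  simpa [qNat, Polynomial.finsetSum_coeff, Polynomial.coeff_X_pow] using
    congrArg (Polynomial.coeff · 0) h

lemma pow_mul_eq_smul_mul_pow {R A : Type*} [CommSemiring R] [Semiring A] [Algebra R A]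
    {p : R} {x y : A} (h : y * x = p • (x * y)) (m : ℕ) :
    y ^ m * x = p ^ m • (x * y ^ m) := by
  induction m with
  | zero => simp
  | succ m ih =>
    rw [pow_succ, mul_assoc, h, mul_smul_comm, ← mul_assoc, ih, smul_mul_assoc, smul_smul,
      mul_assoc, ← pow_succ, ← pow_succ']

section qExp

variable {F A : Type*} [Field F] [Ring A] [Algebra F A] (p : F)

noncomputable def qDividedPow (z : A) (n : ℕ) : A :=
  (qFactorial p n)⁻¹ • z ^ n

noncomputable def qExpSeries (z : A) : PowerSeries A :=
  PowerSeries.mk (qDividedPow p z)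

lemma qDividedPow_zero (z : A) : qDividedPow p z 0 = 1 := by
  simp [qDividedPow, qFactorial]

lemma qDividedPow_mul_self {n : ℕ} (hn : qNat p (n + 1) ≠ 0) (z : A) :
    qDividedPow p z n * z = qNat p (n + 1) • qDividedPow p z (n + 1) := by
  rw [qDividedPow, qDividedPow, qFactorial_succ, mul_inv, mul_comm, smul_smul, ← mul_assoc,
    mul_inv_cancel₀ hn, one_mul, smul_mul_assoc, pow_succ]

lemma qDividedPow_mul_eq_smul_mul {x y : A} (h : y * x = p • (x * y)) (n : ℕ) :
    qDividedPow p y n * x = p ^ n • (x * qDividedPow p y n) := by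
  rw [qDividedPow, smul_mul_assoc, pow_mul_eq_smul_mul_pow h, mul_smul_comm, smul_comm]

end qExp

section qExpAdd

variable {F A : Type*} [Field F] [Ring A] [Algebra F A] {p : F} {x y : A}

lemma sum_qDividedPow_mul_add (hp : ∀ n, qNat p (n + 1) ≠ 0) (h : y * x = p • (x * y))
    (n : ℕ) :
    (∑ ij ∈ antidiagonal n, qDividedPow p x ij.1 * qDividedPow p y ij.2) * (x + y) =
      qNat p (n + 1) •
        ∑ ij ∈ antidiagonal (n + 1), qDividedPow p x ij.1 * qDividedPow p y ij.2 := by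
  set g : ℕ × ℕ → A := fun ij => qDividedPow p x ij.1 * qDividedPow p y ij.2
  have hx (i j : ℕ) : g (i, j) * x = (p ^ j * qNat p (i + 1)) • g (i + 1, j) := by
    rw [mul_assoc, qDividedPow_mul_eq_smul_mul p h, mul_smul_comm, ← mul_assoc,
      qDividedPow_mul_self p (hp i), smul_mul_assoc, smul_smul]
  have hy (i j : ℕ) : g (i, j) * y = qNat p (j + 1) • g (i, j + 1) := by
    rw [mul_assoc, qDividedPow_mul_self p (hp j), mul_smul_comm]
  calc (∑ ij ∈ antidiagonal n, g ij) * (x + y)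
      = ∑ ij ∈ antidiagonal n, ((p ^ ij.2 * qNat p (ij.1 + 1)) • g (ij.1 + 1, ij.2) +
          qNat p (ij.2 + 1) • g (ij.1, ij.2 + 1)) := by
        rw [sum_mul]
        exact sum_congr rfl fun ij _ => by rw [mul_add, hx, hy]
    -- the boundary terms carry the factor `qNat p 0 = 0`
    _ = ∑ ij ∈ antidiagonal (n + 1), (p ^ ij.2 * qNat p ij.1) • g ij +
          ∑ ij ∈ antidiagonal (n + 1), qNat p ij.2 • g ij := by
        rw [sum_add_distrib, Nat.sum_antidiagonal_succ, Nat.sum_antidiagonal_succ']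
        simp
    _ = ∑ ij ∈ antidiagonal (n + 1), qNat p (n + 1) • g ij := by
        rw [← sum_add_distrib]
        refine sum_congr rfl fun ij hij => ?_
        rw [← add_smul, ← mem_antidiagonal.mp hij, add_comm ij.1, qNat_add, add_comm]
    _ = qNat p (n + 1) • ∑ ij ∈ antidiagonal (n + 1), g ij := (smul_sum ..).symm

lemma qDividedPow_add (hp : ∀ n, qNat p (n + 1) ≠ 0) (h : y * x = p • (x * y)) (n : ℕ) :
    qDividedPow p (x + y) n =
      ∑ ij ∈ antidiagonal n, qDividedPow p x ij.1 * qDividedPow p y ij.2 := by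
  induction n with
  | zero => simp [qDividedPow_zero]
  | succ n ih =>
    calc qDividedPow p (x + y) (n + 1)
        = (qNat p (n + 1))⁻¹ • (qDividedPow p (x + y) n * (x + y)) := by
          rw [qDividedPow_mul_self p (hp n), inv_smul_smul₀ (hp n)]
      _ = _ := by rw [ih, sum_qDividedPow_mul_add hp h, inv_smul_smul₀ (hp n)]

theorem qExpSeries_add (hp : ∀ n, qNat p (n + 1) ≠ 0) (h : y * x = p • (x * y)) :
    qExpSeries p (x + y) = qExpSeries p x * qExpSeries p y := by
  ext n
  simpa only [qExpSeries, PowerSeries.coeff_mul, PowerSeries.coeff_mk] using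
    qDividedPow_add hp h n

end qExpAdd

/-- `exp_p(z)` is recorded as the power series `∑_n ((n)_p!)⁻¹ • z^n t^n ∈ A[[t]]`, so the
identity is the coefficientwise one. -/
theorem qExp_add_of_qCommute {A : Type*} [Ring A] [Algebra (RatFunc ℚ) A] (x y : A)
    (h : y * x = algebraMap (RatFunc ℚ) A RatFunc.X * (x * y)) :
    (PowerSeries.mk fun n => (qFactorial (RatFunc.X : RatFunc ℚ) n)⁻¹ • (x + y) ^ n) =
      (PowerSeries.mk fun n => (qFactorial (RatFunc.X : RatFunc ℚ) n)⁻¹ • x ^ n) *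
        (PowerSeries.mk fun n => (qFactorial (RatFunc.X : RatFunc ℚ) n)⁻¹ • y ^ n) :=
  qExpSeries_add qNat_X_succ_ne_zero (by rwa [Algebra.smul_def])
end

section
/- In ℚ[[t,z]] one has the identity exp(−Σ_{n≥1} ((1 − t^n)/(1 + t^n))·z^n/n) = (1 − z)·Π_{j≥1} (1 − t^{2j}z)²·(1 − t^{2j-1}z)^{-2}, where (1 − t^n)/(1 + t^n) is expanded as a power series in t. -/
open Finset

noncomputable section

/-- `ℚ[[t]]`. -/
abbrev Rt : Type := PowerSeries ℚ

/-- The variable `t` of `ℚ[[t]]`. -/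
def tVar : Rt := PowerSeries.X

/-- The image of `t` in `ℚ[[t]][[z]]`. -/
def tC : PowerSeries Rt := PowerSeries.C tVar

/-- The exponential `exp(f) = ∑_{n≥0} f^n/n!` of `f ∈ ℚ[[t]][[z]]` with zero constant
term; the coefficient of `z^m` only involves `f^n` for `n ≤ m`. -/
def expOf (f : PowerSeries Rt) : PowerSeries Rt :=
  PowerSeries.mk fun m =>
    PowerSeries.coeff m (∑ n ∈ range (m + 1), ((n.factorial : ℚ))⁻¹ • f ^ n)

/-- The series `−∑_{n≥1} ((1 − t^n)/(1 + t^n)) z^n/n ∈ ℚ[[t]][[z]]`, where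
`(1 − t^n)/(1 + t^n)` is expanded as a power series in `t` (note `1 + t^n` is a
unit of `ℚ[[t]]`, so `Ring.inverse` is its genuine inverse). -/
def bosonicExponent : PowerSeries Rt :=
  PowerSeries.mk fun n =>
    if n = 0 then 0
    else -(n : ℚ)⁻¹ • ((1 - tVar ^ n) * Ring.inverse (1 + tVar ^ n))

/-!
Both sides have constant term `1` in `z`, so it suffices to compare logarithmic `z`-derivatives
modulo `t ^ (2K+1)`. The logarithmic derivative of `1 - a z` is `-∑ a ^ (m+1) z ^ m`, so that of
the `K`-th partial product has `z ^ m`-coefficient `-1 + 2 ∑_{j ≤ K} (v ^ (2j-1) - v ^ (2j))` with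
`v = t ^ (m+1)`. Multiplied by `1 + v` this telescopes to `-(1 - v) - 2 v ^ (2K+1)`, while `1 + v`
times the `z ^ m`-coefficient of the derivative of the exponent is `-(1 - v)`. Over the
`ℚ`-algebra `ℚ[[t]] / (t ^ (2K+1))` a solution of `F' = L F` is determined by its constant term.
-/

open PowerSeries

namespace PowerSeries

variable {A B : Type*} [CommRing A] [CommRing B]

theorem derivative_map (φ : A →+* B) (f : A⟦X⟧) :
    d⁄dX B (map φ f) = map φ (d⁄dX A f) := by
  ext n
  simp [coeff_derivative, coeff_map]

theorem derivative_mul_eq_mul {F G L M : A⟦X⟧} (hF : d⁄dX A F = L * F)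
    (hG : d⁄dX A G = M * G) : d⁄dX A (F * G) = (L + M) * (F * G) := by
  rw [Derivation.leibniz, smul_eq_mul, smul_eq_mul, hF, hG]
  ring

theorem derivative_pow_eq_mul {F L : A⟦X⟧} (hF : d⁄dX A F = L * F) (n : ℕ) :
    d⁄dX A (F ^ n) = (n • L) * F ^ n := by
  induction n with
  | zero => simp
  | succ n ih =>
    rw [pow_succ, derivative_mul_eq_mul ih hF, succ_nsmul]

theorem derivative_prod_eq_mul {ι : Type*} (s : Finset ι) {F L : ι → A⟦X⟧}
    (h : ∀ i ∈ s, d⁄dX A (F i) = L i * F i) :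
    d⁄dX A (∏ i ∈ s, F i) = (∑ i ∈ s, L i) * ∏ i ∈ s, F i := by
  induction s using Finset.cons_induction with
  | empty => simp
  | cons i s hi ih =>
    rw [Finset.prod_cons, Finset.sum_cons, derivative_mul_eq_mul (h i (Finset.mem_cons_self i s))
      (ih fun j hj => h j (Finset.mem_cons_of_mem hj))]

def logDerivOneSub (a : A) : A⟦X⟧ := mk fun m => -a ^ (m + 1)

theorem derivative_one_sub_C_mul_X (a : A) :
    d⁄dX A (1 - C a * X) = logDerivOneSub a * (1 - C a * X) := by
  ext (_ | m) <;> simp [logDerivOneSub, mul_sub, ← mul_assoc, coeff_succ_mul_X, pow_succ]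

theorem isUnit_one_sub_C_mul_X (a : A) : IsUnit (1 - C a * X) := by
  simp [isUnit_iff_constantCoeff]

theorem eq_of_derivative_eq_mul [Algebra ℚ A] {F G L : A⟦X⟧} (hF : d⁄dX A F = L * F)
    (hG : d⁄dX A G = L * G) (h0 : constantCoeff F = constantCoeff G) : F = G := by
  ext n
  induction n using Nat.strong_induction_on with
  | _ n ih =>
  rcases n with _ | n
  · simpa using h0
  have hunit : IsUnit ((n : A) + 1) := by
    simpa using (isUnit_iff_ne_zero.mpr (by positivity : (n : ℚ) + 1 ≠ 0)).map (algebraMap ℚ A)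
  refine hunit.mul_right_cancel ?_
  rw [← coeff_derivative, ← coeff_derivative, hF, hG, coeff_mul, coeff_mul]
  refine Finset.sum_congr rfl fun p hp => ?_
  rw [ih p.2 (by have := Finset.HasAntidiagonal.mem_antidiagonal.mp hp; omega)]

theorem coeff_pow_eq_zero_of_lt {f : A⟦X⟧} (hf : constantCoeff f = 0)
    {m n : ℕ} (h : m < n) : coeff m (f ^ n) = 0 :=
  X_pow_dvd_iff.mp (pow_dvd_pow_of_dvd (X_dvd_iff.mpr hf) n) m h

theorem coeff_eq_of_mk_span_X_pow_eq {N m : ℕ} {f g : A⟦X⟧}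
    (h : Ideal.Quotient.mk (Ideal.span {X ^ N}) f = Ideal.Quotient.mk _ g) (hm : m < N) :
    coeff m f = coeff m g := by
  have hdvd := Ideal.mem_span_singleton.mp (Ideal.Quotient.eq.mp h)
  exact sub_eq_zero.mp (by simpa using X_pow_dvd_iff.mp hdvd m hm)

end PowerSeries

theorem expOf_eq_subst {f : PowerSeries Rt} (hf : constantCoeff f = 0) :
    expOf f = (exp Rt).subst f := by
  ext m : 1
  rw [expOf, coeff_mk, coeff_subst' (.of_constantCoeff_zero' hf),
    finsum_eq_sum_of_support_subset (s := range (m + 1))]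
  · simp only [map_sum, coeff_exp, one_div, smul_eq_mul, Algebra.smul_def,
      PowerSeries.algebraMap_apply, coeff_C_mul]
  · intro n hn
    by_contra h
    simp_all [coeff_pow_eq_zero_of_lt hf (m := m) (n := n) (by simpa using h)]

theorem derivative_expOf {f : PowerSeries Rt} (hf : constantCoeff f = 0) :
    d⁄dX Rt (expOf f) = d⁄dX Rt f * expOf f := by
  rw [expOf_eq_subst hf, derivative_subst (.of_constantCoeff_zero' hf), derivative_exp, mul_comm]

theorem constantCoeff_expOf (f : PowerSeries Rt) : constantCoeff (expOf f) = 1 := by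
  rw [← coeff_zero_eq_constantCoeff_apply, expOf, coeff_mk]
  simp

section FactorProducts

variable {A B : Type*} [CommRing A] [CommRing B]

def evenFactorProd (u : A) (K : ℕ) : A⟦X⟧ :=
  (1 - X) * ∏ j ∈ Icc 1 K, (1 - C (u ^ (2 * j)) * X) ^ 2

def oddFactorProd (u : A) (K : ℕ) : A⟦X⟧ :=
  ∏ j ∈ Icc 1 K, (1 - C (u ^ (2 * j - 1)) * X) ^ 2

def evenLogDeriv (u : A) (K : ℕ) : A⟦X⟧ :=
  logDerivOneSub 1 + ∑ j ∈ Icc 1 K, 2 • logDerivOneSub (u ^ (2 * j))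

def oddLogDeriv (u : A) (K : ℕ) : A⟦X⟧ :=
  ∑ j ∈ Icc 1 K, 2 • logDerivOneSub (u ^ (2 * j - 1))

theorem derivative_evenFactorProd (u : A) (K : ℕ) :
    d⁄dX A (evenFactorProd u K) = evenLogDeriv u K * evenFactorProd u K := by
  have h := derivative_one_sub_C_mul_X (1 : A)
  rw [map_one, one_mul] at h
  exact derivative_mul_eq_mul h <| derivative_prod_eq_mul _ fun j _ => by
    simpa using derivative_pow_eq_mul (derivative_one_sub_C_mul_X (u ^ (2 * j))) 2

theorem derivative_oddFactorProd (u : A) (K : ℕ) :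
    d⁄dX A (oddFactorProd u K) = oddLogDeriv u K * oddFactorProd u K :=
  derivative_prod_eq_mul _ fun j _ => by
    simpa using derivative_pow_eq_mul (derivative_one_sub_C_mul_X (u ^ (2 * j - 1))) 2

theorem constantCoeff_evenFactorProd (u : A) (K : ℕ) :
    constantCoeff (evenFactorProd u K) = 1 := by
  simp [evenFactorProd, map_prod]

theorem constantCoeff_oddFactorProd (u : A) (K : ℕ) :
    constantCoeff (oddFactorProd u K) = 1 := by
  simp [oddFactorProd, map_prod]

theorem map_evenFactorProd (φ : A →+* B) (u : A) (K : ℕ) :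
    map φ (evenFactorProd u K) = evenFactorProd (φ u) K := by
  simp [evenFactorProd, map_prod]

theorem map_oddFactorProd (φ : A →+* B) (u : A) (K : ℕ) :
    map φ (oddFactorProd u K) = oddFactorProd (φ u) K := by
  simp [oddFactorProd, map_prod]

theorem isUnit_oddFactorProd (u : A) (K : ℕ) :
    IsUnit (oddFactorProd u K) := by
  rw [isUnit_iff_constantCoeff, constantCoeff_oddFactorProd]
  exact isUnit_one

theorem one_sub_X_mul_prod_mul_inverse_mul_oddFactorProd (u : A) (K : ℕ) :
    ((1 - X) * ∏ j ∈ Icc 1 K,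
        ((1 - C (u ^ (2 * j)) * X) ^ 2 * Ring.inverse ((1 - C (u ^ (2 * j - 1)) * X) ^ 2))) *
      oddFactorProd u K = evenFactorProd u K := by
  rw [oddFactorProd, evenFactorProd, mul_assoc, ← Finset.prod_mul_distrib]
  congr 1
  refine Finset.prod_congr rfl fun j _ => ?_
  rw [mul_assoc, Ring.inverse_mul_cancel _ ((isUnit_one_sub_C_mul_X _).pow 2), mul_one]

theorem one_add_mul_sum_pow_sub_pow (v : A) (K : ℕ) :
    (1 + v) * ∑ j ∈ Icc 1 K, (v ^ (2 * j - 1) - v ^ (2 * j)) = v - v ^ (2 * K + 1) := by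
  induction K with
  | zero => simp
  | succ K ih =>
    rw [Finset.sum_Icc_succ_top (by omega), mul_add, ih,
      show 2 * (K + 1) - 1 = 2 * K + 1 by omega, show 2 * (K + 1) + 1 = 2 * K + 1 + 2 by omega]
    ring

theorem one_add_pow_mul_coeff_evenLogDeriv_sub_oddLogDeriv (u : A) (K m : ℕ) :
    (1 + u ^ (m + 1)) * coeff m (evenLogDeriv u K - oddLogDeriv u K) =
      -(1 - u ^ (m + 1)) - 2 * (u ^ (m + 1)) ^ (2 * K + 1) := by
  have hsum := one_add_mul_sum_pow_sub_pow (u ^ (m + 1)) K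
  have hcoeff : coeff m (evenLogDeriv u K - oddLogDeriv u K) =
      -1 + 2 * ∑ j ∈ Icc 1 K, ((u ^ (m + 1)) ^ (2 * j - 1) - (u ^ (m + 1)) ^ (2 * j)) := by
    simp only [evenLogDeriv, oddLogDeriv, logDerivOneSub, map_add, map_sub, map_sum, map_nsmul,
      coeff_mk, one_pow, ← pow_mul, mul_comm (m + 1), Finset.mul_sum]
    rw [add_sub_assoc, ← Finset.sum_sub_distrib]
    congr 1
    refine Finset.sum_congr rfl fun j _ => ?_
    simp only [nsmul_eq_mul]
    push_cast
    ring
  rw [hcoeff]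
  linear_combination 2 * hsum

end FactorProducts

theorem constantCoeff_bosonicExponent : constantCoeff bosonicExponent = 0 := by
  rw [← coeff_zero_eq_constantCoeff_apply, bosonicExponent, coeff_mk, if_pos rfl]

theorem isUnit_one_add_tVar_pow {n : ℕ} (hn : n ≠ 0) : IsUnit (1 + tVar ^ n) := by
  simp [isUnit_iff_constantCoeff, tVar, hn]

theorem one_add_tVar_pow_mul_coeff_derivative_bosonicExponent (m : ℕ) :
    (1 + tVar ^ (m + 1)) * coeff m (d⁄dX Rt bosonicExponent) = -(1 - tVar ^ (m + 1)) := by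
  have hinv := Ring.mul_inverse_cancel _ (isUnit_one_add_tVar_pow m.add_one_ne_zero)
  have hcast : algebraMap ℚ Rt ((m + 1 : ℕ) : ℚ)⁻¹ * ((m : Rt) + 1) = 1 := by
    rw [show (m : Rt) + 1 = algebraMap ℚ Rt ((m + 1 : ℕ) : ℚ) by simp, ← map_mul,
      inv_mul_cancel₀ (by positivity), map_one]
  rw [coeff_derivative, bosonicExponent, coeff_mk, if_neg m.add_one_ne_zero, neg_smul,
    Algebra.smul_def]
  linear_combination (-(1 - tVar ^ (m + 1)) * algebraMap ℚ Rt ((m + 1 : ℕ) : ℚ)⁻¹ *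
    ((m : Rt) + 1)) * hinv - (1 - tVar ^ (m + 1)) * hcast

def truncMk (K : ℕ) : Rt →+* Rt ⧸ Ideal.span {tVar ^ (2 * K + 1)} := Ideal.Quotient.mk _

theorem truncMk_tVar_pow (K : ℕ) : truncMk K tVar ^ (2 * K + 1) = 0 := by
  rw [← map_pow, truncMk, Ideal.Quotient.eq_zero_iff_mem]
  exact Ideal.mem_span_singleton_self _

theorem map_truncMk_derivative_bosonicExponent (K : ℕ) :
    map (truncMk K) (d⁄dX Rt bosonicExponent) =
      evenLogDeriv (truncMk K tVar) K - oddLogDeriv (truncMk K tVar) K := by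
  ext m
  refine ((isUnit_one_add_tVar_pow m.add_one_ne_zero).map (truncMk K)).mul_left_cancel ?_
  rw [coeff_map, ← map_mul, one_add_tVar_pow_mul_coeff_derivative_bosonicExponent, map_add,
    map_one, map_pow, one_add_pow_mul_coeff_evenLogDeriv_sub_oddLogDeriv, ← pow_mul,
    mul_comm (m + 1) (2 * K + 1), pow_mul, truncMk_tVar_pow]
  simp

theorem map_truncMk_expOf_mul_oddFactorProd (K : ℕ) :
    map (truncMk K) (expOf bosonicExponent) * oddFactorProd (truncMk K tVar) K =
      evenFactorProd (truncMk K tVar) K := by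
  have hexp : d⁄dX _ (map (truncMk K) (expOf bosonicExponent)) =
      (evenLogDeriv (truncMk K tVar) K - oddLogDeriv (truncMk K tVar) K) *
        map (truncMk K) (expOf bosonicExponent) := by
    rw [derivative_map, derivative_expOf constantCoeff_bosonicExponent, map_mul,
      map_truncMk_derivative_bosonicExponent]
  refine eq_of_derivative_eq_mul ?_ (derivative_evenFactorProd _ K) ?_
  · rw [derivative_mul_eq_mul hexp (derivative_oddFactorProd _ K), sub_add_cancel]
  · rw [constantCoeff_evenFactorProd, map_mul, constantCoeff_oddFactorProd, mul_one,
      ← coeff_zero_eq_constantCoeff_apply, coeff_map, coeff_zero_eq_constantCoeff_apply,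
      constantCoeff_expOf, map_one]

/-- `exp(−∑_{n≥1} ((1−t^n)/(1+t^n)) z^n/n) = (1−z)·∏_{j≥1} (1−t^{2j}z)²(1−t^{2j-1}z)^{-2}`
in `ℚ[[t,z]]`: each factor is a unit, and the infinite product converges `t`-adically,
i.e. each coefficient of `t^m z^d` of `(1−z)` times the partial product over
`1 ≤ j ≤ K` with `m < 2K+1` equals the corresponding coefficient of the exponential. -/
theorem exp_bosonicExponent_product :
    (∀ j : ℕ, IsUnit ((1 - tC ^ (2 * j - 1) * (PowerSeries.X : PowerSeries Rt)) ^ 2)) ∧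
    ∀ d m K : ℕ, m < 2 * K + 1 →
      PowerSeries.coeff m (PowerSeries.coeff d
        ((1 - PowerSeries.X) *
          ∏ j ∈ Icc 1 K,
            ((1 - tC ^ (2 * j) * PowerSeries.X) ^ 2 *
              Ring.inverse ((1 - tC ^ (2 * j - 1) * PowerSeries.X) ^ 2)))) =
      PowerSeries.coeff m (PowerSeries.coeff d (expOf bosonicExponent)) := by
  have htC (k : ℕ) : tC ^ k = C (tVar ^ k) := by rw [tC, map_pow]
  simp_rw [htC]
  refine ⟨fun j => (isUnit_one_sub_C_mul_X _).pow 2, fun d m K hm => ?_⟩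
  have hmap : map (truncMk K) ((1 - X) * ∏ j ∈ Icc 1 K,
        ((1 - C (tVar ^ (2 * j)) * X) ^ 2 * Ring.inverse ((1 - C (tVar ^ (2 * j - 1)) * X) ^ 2))) =
      map (truncMk K) (expOf bosonicExponent) := by
    refine (isUnit_oddFactorProd (truncMk K tVar) K).mul_right_cancel ?_
    rw [map_truncMk_expOf_mul_oddFactorProd, ← map_oddFactorProd, ← map_mul,
      one_sub_X_mul_prod_mul_inverse_mul_oddFactorProd, map_evenFactorProd]
  have hd := congrArg (coeff d) hmap
  rw [coeff_map, coeff_map] at hd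
  exact coeff_eq_of_mk_span_X_pow_eq hd hm

end
end

section
/- Let G be the free abelian group on symbols K_{i,k} for i ∈ {1,2} and k ∈ ℤ. Define group endomorphisms T₁, T₂ of G by T_i(K_{i,k}) = −K_{i,k} and T_i(K_{j,k}) = K_{i,k+1} + K_{j,k+2} for j ≠ i. Then T₁T₂T₁ = T₂T₁T₂. -/
/-!
Both words `T₁T₂T₁` and `T₂T₁T₂` represent the longest element of the Weyl group of `sl₃`, and a
direct computation on generators shows that either one sends `K_{l,k}` to `−K_{l',k+3}`, where `l'`
is the index other than `l` (the shift `3` is the dual Coxeter number of `sl₃`).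
-/

/-- The free abelian group on symbols `K_{i,k}`, `i ∈ {1,2}` (encoded as `Fin 2`),
`k ∈ ℤ`. -/
abbrev FreeCartan : Type := (Fin 2 × ℤ) →₀ ℤ

/-- The endomorphism `T_i` of the free abelian group: `T_i(K_{i,k}) = −K_{i,k}` and
`T_i(K_{j,k}) = K_{i,k+1} + K_{j,k+2}` for `j ≠ i`. -/
noncomputable def Tgen (i : Fin 2) : FreeCartan →ₗ[ℤ] FreeCartan :=
  Finsupp.lift FreeCartan ℤ (Fin 2 × ℤ) fun jk =>
    if jk.1 = i then -(Finsupp.single (i, jk.2) 1)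
    else Finsupp.single (i, jk.2 + 1) 1 + Finsupp.single (jk.1, jk.2 + 2) 1

open Finsupp

lemma Tgen_single_self (i : Fin 2) (k : ℤ) : Tgen i (single (i, k) 1) = -single (i, k) 1 := by
  simp [Tgen]

lemma Tgen_single_of_ne {i j : Fin 2} (hji : j ≠ i) (k : ℤ) :
    Tgen i (single (j, k) 1) = single (i, k + 1) 1 + single (j, k + 2) 1 := by
  simp [Tgen, hji]

lemma Tgen_Tgen_Tgen_single {i j : Fin 2} (hij : i ≠ j) (l : Fin 2) (k : ℤ) :
    Tgen i (Tgen j (Tgen i (single (l, k) 1))) = -single (if l = i then j else i, k + 3) 1 := by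
  have hji := hij.symm
  obtain rfl | rfl : l = i ∨ l = j := by omega
  · calc Tgen l (Tgen j (Tgen l (single (l, k) 1)))
        = -(single (l, k + 2) 1 + single (j, k + 1 + 2) 1) + single (l, k + 2) 1 := by
          simp [Tgen_single_self, Tgen_single_of_ne hij, Tgen_single_of_ne hji, add_assoc]
      _ = -single (if l = l then j else l, k + 3) 1 := by
          rw [if_pos rfl, show k + 1 + 2 = k + 3 by ring]
          abel
  · calc Tgen i (Tgen l (Tgen i (single (l, k) 1)))
        = Tgen i (single (l, k + 1 + 1) 1 + single (i, k + 1 + 2) 1 - single (l, k + 2) 1) := by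
          simp [Tgen_single_self, Tgen_single_of_ne hij, Tgen_single_of_ne hji, sub_eq_add_neg]
      _ = -single (if l = i then l else i, k + 3) 1 := by
          rw [show k + 1 + 1 = k + 2 by ring, show k + 1 + 2 = k + 3 by ring, add_sub_cancel_left,
            Tgen_single_self, if_neg hji]

/-- The braid relation `T₁T₂T₁ = T₂T₁T₂` for the action on Cartan currents. -/
theorem Tgen_braid_relation :
    Tgen 0 ∘ₗ Tgen 1 ∘ₗ Tgen 0 = Tgen 1 ∘ₗ Tgen 0 ∘ₗ Tgen 1 := by
  ext ⟨l, k⟩ : 2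
  simp only [LinearMap.comp_apply, lsingle_apply, Tgen_Tgen_Tgen_single zero_ne_one,
    Tgen_Tgen_Tgen_single one_ne_zero]
  fin_cases l <;> rfl
end
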